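/- arXiv:1911.07881 — 6 statements merged into one kernel-verified Lean document; each statement's English description precedes it below -/
import Mathlib

section
/- Let (t_n)_{n≥1} be a non-increasing sequence of real numbers with t_n > 0 for every n and ∑_{n=1}^∞ t_n = ∞. Then there exists a non-increasing sequence (s_n)_{n≥1} such that 0 < s_n ≤ t_n for every n, ∑_{n=1}^∞ s_n = ∞, and ∑_{n=1}^∞ s_n² < ∞. -/
/-!
Cap `t` by the harmonic sequence: `s n = min (t n) (1 / (n + 1))`. Then `s n ^ 2 ≤ 1 / (n + 1) ^ 2`
is summable. If `∑ s` converged, Cauchy condensation would give `2 ^ k * s (2 ^ k) → 0`, so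
eventually `s (2 ^ k) < 1 / (2 ^ k + 1)`, i.e. `s (2 ^ k) = t (2 ^ k)`; the condensed series of `t`
would then converge, and so would `∑ t`.
-/

open Filter

lemma min_div_add_one_eq_left {a c x : ℝ} (ha : 0 ≤ a) (hc : 0 ≤ c) (hx : 1 ≤ x)
    (h : x * min a (c / (x + 1)) < c / 2) : min a (c / (x + 1)) = a := by
  have hm : 0 ≤ min a (c / (x + 1)) := le_min ha (by positivity)
  have hlt : min a (c / (x + 1)) < c / (x + 1) := by
    rw [lt_div_iff₀ (by linarith)]
    nlinarith
  exact min_eq_left ((min_lt_iff.1 hlt).resolve_right (lt_irrefl _)).le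

lemma antitone_div_nat_add_one {c : ℝ} (hc : 0 ≤ c) : Antitone fun n : ℕ => c / (n + 1) :=
  fun _ _ hmn => div_le_div_of_nonneg_left hc (by positivity) (by gcongr)

lemma summable_div_nat_add_one_sq (c : ℝ) : Summable fun n : ℕ => (c / (n + 1)) ^ 2 := by
  have h := (summable_nat_add_iff 1).2 (Real.summable_nat_pow_inv.2 one_lt_two)
  refine (h.mul_left (c ^ 2)).congr fun n => ?_
  push_cast
  rw [div_pow, div_eq_mul_inv]

lemma not_summable_min_div_nat_add_one {f : ℕ → ℝ} (hf : Antitone f) (hf0 : ∀ n, 0 ≤ f n)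
    (hdiv : ¬ Summable f) {c : ℝ} (hc : 0 < c) :
    ¬ Summable fun n : ℕ => min (f n) (c / (n + 1)) := by
  set s : ℕ → ℝ := fun n => min (f n) (c / (n + 1))
  have hs0 : ∀ n, 0 ≤ s n := fun n => le_min (hf0 n) (by positivity)
  have hs_anti : Antitone s := hf.min (antitone_div_nat_add_one hc.le)
  intro hs
  have hcond : Summable fun k : ℕ => (2 : ℝ) ^ k * s (2 ^ k) :=
    (summable_condensed_iff_of_nonneg hs0 fun _ _ _ h => hs_anti h).2 hs
  have hsmall : ∀ᶠ k in atTop, (2 : ℝ) ^ k * s (2 ^ k) < c / 2 :=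
    hcond.tendsto_atTop_zero.eventually (gt_mem_nhds (half_pos hc))
  have heq : (fun k : ℕ => (2 : ℝ) ^ k * s (2 ^ k)) =ᶠ[cofinite]
      fun k => (2 : ℝ) ^ k * f (2 ^ k) := by
    rw [Nat.cofinite_eq_atTop]
    filter_upwards [hsmall] with k hk
    have hs_eq : s (2 ^ k) = f (2 ^ k) := by
      simp only [s, Nat.cast_pow, Nat.cast_ofNat] at hk ⊢
      exact min_div_add_one_eq_left (hf0 _) hc.le (one_le_pow₀ one_le_two) hk
    rw [hs_eq]
  exact hdiv ((summable_condensed_iff_of_nonneg hf0 fun _ _ _ h => hf h).1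
    ((summable_congr_cofinite heq).1 hcond))

/-- Lemma 2.3: given a non-increasing positive sequence `t` with divergent series,
there is a non-increasing sequence `s` with `0 < s n ≤ t n`, divergent series,
and square-summable. -/
theorem divergent_antitone_exists_square_summable_minorant
    (t : ℕ → ℝ) (ht_anti : Antitone t) (ht_pos : ∀ n, 0 < t n)
    (ht_div : ¬ Summable t) :
    ∃ s : ℕ → ℝ, Antitone s ∧ (∀ n, 0 < s n) ∧ (∀ n, s n ≤ t n) ∧
      ¬ Summable s ∧ Summable (fun n => (s n) ^ 2) := by
  refine ⟨fun n => min (t n) (1 / (n + 1)), ht_anti.min (antitone_div_nat_add_one zero_le_one),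
    fun n => lt_min (ht_pos n) (by positivity), fun n => min_le_left _ _,
    not_summable_min_div_nat_add_one ht_anti (fun n => (ht_pos n).le) ht_div one_pos, ?_⟩
  refine (summable_div_nat_add_one_sq 1).of_nonneg_of_le (fun n => sq_nonneg _) fun n => ?_
  exact pow_le_pow_left₀ (le_min (ht_pos n).le (by positivity)) (min_le_right _ _) 2
end

section
/- Let (Ω, F, μ) be a probability space, (S_k)_{k≥1} a sequence of nonnegative measurable functions on Ω, (δ_k)_{k≥1} a non-increasing sequence of positive reals with ∑_{k=1}^∞ δ_k = ∞ and ∑_{k=1}^∞ δ_k² < ∞, and C ≥ 0 a constant such that for every k and every t with 0 < t < δ_k one has μ{ω : S_k(ω) < t} ≤ C t². Then for every t > 0, μ{ω : ∑_{k=1}^∞ S_k(ω) < t} = 0; that is, ∑_{k=1}^∞ S_k = ∞ almost surely. -/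
/-!
On the event `∑ₖ Sₖ < t`, some `Sₖ` must fall below `ε δₖ` as soon as `∑ₖ ε δₖ > t`, which holds
for every `ε > 0` because `∑ δₖ = ∞`. A union bound and the small-time estimate bound the
probability of this event by `C ε² ∑ₖ δₖ²`, which tends to `0` with `ε` since `∑ δₖ² < ∞`.
-/

open MeasureTheory Filter

open scoped ENNReal Topology

lemma ENNReal.tsum_ofReal_eq_top_of_not_summable {ι : Type*} {f : ι → ℝ} (hf : ∀ i, 0 ≤ f i)
    (h : ¬ Summable f) : ∑' i, ENNReal.ofReal (f i) = ∞ := by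
  by_contra hne
  exact h (by simpa [ENNReal.toReal_ofReal (hf _)] using ENNReal.summable_toReal hne)

section

variable {Ω ι : Type*} [MeasurableSpace Ω] (μ : Measure Ω)

lemma measure_tsum_lt_le_tsum_measure_lt [Countable ι] {X : ι → Ω → ℝ≥0∞} {a : ι → ℝ≥0∞}
    {t : ℝ≥0∞} (ht : t < ∑' i, a i) :
    μ {ω | ∑' i, X i ω < t} ≤ ∑' i, μ {ω | X i ω < a i} := by
  have hcover : {ω | ∑' i, X i ω < t} ⊆ ⋃ i, {ω | X i ω < a i} := by
    intro ω hω
    by_contra hnot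
    simp only [Set.mem_iUnion, Set.mem_ofPred_eq, not_exists, not_lt] at hnot
    exact (ht.trans_le (ENNReal.tsum_le_tsum hnot)).not_gt hω
  exact (measure_mono hcover).trans (measure_iUnion_le _)

lemma measure_tsum_ofReal_lt_le_mul_tsum_sq [Countable ι] (S : ι → Ω → ℝ) (δ : ι → ℝ)
    (hδpos : ∀ i, 0 < δ i) (hδdiv : ¬ Summable δ) (C : ℝ)
    (hest : ∀ i, ∀ t : ℝ, 0 < t → t < δ i → μ {ω | S i ω < t} ≤ ENNReal.ofReal (C * t ^ 2))
    (t : ℝ) {ε : ℝ} (hε0 : 0 < ε) (hε1 : ε < 1) :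
    μ {ω | ∑' i, ENNReal.ofReal (S i ω) < ENNReal.ofReal t} ≤
      ENNReal.ofReal (C * ε ^ 2) * ∑' i, ENNReal.ofReal (δ i ^ 2) := by
  have hscaled_div : ENNReal.ofReal t < ∑' i, ENNReal.ofReal (ε * δ i) := by
    simp_rw [ENNReal.ofReal_mul hε0.le]
    rw [ENNReal.tsum_mul_left,
      ENNReal.tsum_ofReal_eq_top_of_not_summable (fun i => (hδpos i).le) hδdiv,
      ENNReal.mul_top (by simpa using hε0)]
    exact ENNReal.ofReal_lt_top
  calc μ {ω | ∑' i, ENNReal.ofReal (S i ω) < ENNReal.ofReal t}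
      ≤ ∑' i, μ {ω | ENNReal.ofReal (S i ω) < ENNReal.ofReal (ε * δ i)} :=
        measure_tsum_lt_le_tsum_measure_lt μ hscaled_div
    _ ≤ ∑' i, μ {ω | S i ω < ε * δ i} :=
        ENNReal.tsum_le_tsum fun i =>
          measure_mono fun ω hω => (ENNReal.ofReal_lt_ofReal_iff'.1 hω).1
    _ ≤ ∑' i, ENNReal.ofReal (C * (ε * δ i) ^ 2) :=
        ENNReal.tsum_le_tsum fun i =>
          hest i _ (mul_pos hε0 (hδpos i)) (mul_lt_of_lt_one_left (hδpos i) hε1)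
    _ = ENNReal.ofReal (C * ε ^ 2) * ∑' i, ENNReal.ofReal (δ i ^ 2) := by
        rw [← ENNReal.tsum_mul_left]
        congr 1 with i
        rw [← ENNReal.ofReal_mul' (sq_nonneg _)]
        ring_nf

lemma ae_eq_top_of_forall_measure_lt_ofReal_eq_zero {f : Ω → ℝ≥0∞}
    (h : ∀ t : ℝ, 0 < t → μ {ω | f ω < ENNReal.ofReal t} = 0) : ∀ᵐ ω ∂μ, f ω = ∞ := by
  have hlarge : ∀ᵐ ω ∂μ, ∀ n : ℕ, ¬ f ω < ENNReal.ofReal (n + 1) :=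
    ae_all_iff.2 fun n => by simpa [ae_iff] using h (n + 1) n.cast_add_one_pos
  filter_upwards [hlarge] with ω hω
  by_contra hne
  obtain ⟨n, hn⟩ := ENNReal.exists_nat_gt hne
  exact hω n (hn.trans_le (by rw [ENNReal.ofReal_add (by positivity) zero_le_one]; simp))

end

lemma ENNReal.eq_zero_of_forall_le_ofReal_mul_sq {m M : ℝ≥0∞} (hM : M ≠ ∞) (C : ℝ)
    (h : ∀ ε : ℝ, 0 < ε → ε < 1 → m ≤ ENNReal.ofReal (C * ε ^ 2) * M) : m = 0 := by
  have hlim : Tendsto (fun ε : ℝ => ENNReal.ofReal (C * ε ^ 2) * M) (𝓝[>] 0) (𝓝 0) := by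
    have hpoly : Tendsto (fun ε : ℝ => C * ε ^ 2) (𝓝 0) (𝓝 0) := by
      simpa using ((continuous_pow 2).const_mul C).tendsto 0
    simpa using ENNReal.Tendsto.mul_const
      (ENNReal.tendsto_ofReal (hpoly.mono_left nhdsWithin_le_nhds)) (Or.inr hM)
  exact nonpos_iff_eq_zero.1 <| ge_of_tendsto hlim <|
    eventually_of_mem (Ioo_mem_nhdsGT one_pos) fun ε hε => h ε hε.1 hε.2

theorem sum_eq_top_ae_of_quadratic_small_time_bound_general
    {Ω : Type*} [MeasurableSpace Ω] (μ : Measure Ω)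
    (S : ℕ → Ω → ℝ)
    (δ : ℕ → ℝ) (hδpos : ∀ k, 0 < δ k)
    (hδdiv : ¬ Summable δ) (hδsq : Summable fun k => (δ k) ^ 2)
    (C : ℝ)
    (hest : ∀ k, ∀ t : ℝ, 0 < t → t < δ k →
      μ {ω | S k ω < t} ≤ ENNReal.ofReal (C * t ^ 2)) :
    (∀ t : ℝ, 0 < t →
      μ {ω | ∑' k, ENNReal.ofReal (S k ω) < ENNReal.ofReal t} = 0) ∧
    (∀ᵐ ω ∂μ, ∑' k, ENNReal.ofReal (S k ω) = ⊤) := by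
  have hsmall : ∀ t : ℝ, 0 < t →
      μ {ω | ∑' k, ENNReal.ofReal (S k ω) < ENNReal.ofReal t} = 0 := fun t _ =>
    ENNReal.eq_zero_of_forall_le_ofReal_mul_sq hδsq.tsum_ofReal_ne_top C fun _ hε0 hε1 =>
      measure_tsum_ofReal_lt_le_mul_tsum_sq μ S δ hδpos hδdiv C hest t hε0 hε1
  exact ⟨hsmall, ae_eq_top_of_forall_measure_lt_ofReal_eq_zero μ hsmall⟩

/-- Probabilistic core of Theorem 2.4 (nonexplosion under a weak uniform cover):
if `μ {S k < t} ≤ C t²` for `0 < t < δ k`, where `δ` is non-increasing, positive,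
non-summable, and square-summable, then `∑ₖ S k = ∞` almost surely. -/
theorem sum_eq_top_ae_of_quadratic_small_time_bound
    {Ω : Type*} [MeasurableSpace Ω] (μ : Measure Ω) [IsProbabilityMeasure μ]
    (S : ℕ → Ω → ℝ) (hSmeas : ∀ k, Measurable (S k)) (hSnonneg : ∀ k ω, 0 ≤ S k ω)
    (δ : ℕ → ℝ) (hδanti : Antitone δ) (hδpos : ∀ k, 0 < δ k)
    (hδdiv : ¬ Summable δ) (hδsq : Summable fun k => (δ k) ^ 2)
    (C : ℝ) (hC : 0 ≤ C)
    (hest : ∀ k, ∀ t : ℝ, 0 < t → t < δ k →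
      μ {ω | S k ω < t} ≤ ENNReal.ofReal (C * t ^ 2)) :
    (∀ t : ℝ, 0 < t →
      μ {ω | ∑' k, ENNReal.ofReal (S k ω) < ENNReal.ofReal t} = 0) ∧
    (∀ᵐ ω ∂μ, ∑' k, ENNReal.ofReal (S k ω) = ⊤) :=
  sum_eq_top_ae_of_quadratic_small_time_bound_general μ S δ hδpos hδdiv hδsq C hest
end

section
/- Let (Ω, F, μ) be a probability space, p a positive integer, S_1, …, S_p : Ω → ℝ nonnegative measurable functions, δ > 0 and C ≥ 0 constants such that for every k ∈ {1,…,p} and every s with 0 < s < δ one has μ{ω : S_k(ω) < s} ≤ C s². Then for every t > 0 with t/p < δ, μ{ω : ∑_{k=1}^p S_k(ω) < t} ≤ C t² / p. -/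
open MeasureTheory Finset

/-- Quantitative estimate in the proof of Theorem 3.2: if each `S k` satisfies
`μ {S k < s} ≤ C s²` for `0 < s < δ`, then for `0 < t` with `t / p < δ`,
`μ {∑_{k<p} S k < t} ≤ C t² / p`. -/
theorem measure_sum_lt_le_of_quadratic_bound
    {Ω : Type*} [MeasurableSpace Ω] (μ : Measure Ω) [IsProbabilityMeasure μ]
    (p : ℕ) (hp : 0 < p) (S : ℕ → Ω → ℝ)
    (hSmeas : ∀ k < p, Measurable (S k)) (hSnonneg : ∀ k < p, ∀ ω, 0 ≤ S k ω)
    (δ C : ℝ) (hδ : 0 < δ) (hC : 0 ≤ C)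
    (hest : ∀ k < p, ∀ s : ℝ, 0 < s → s < δ →
      μ {ω | S k ω < s} ≤ ENNReal.ofReal (C * s ^ 2))
    (t : ℝ) (ht : 0 < t) (htp : t / p < δ) :
    μ {ω | ∑ k ∈ range p, S k ω < t} ≤ ENNReal.ofReal (C * t ^ 2 / p) := by
  have hpR : (0:ℝ) < p := Nat.cast_pos.mpr hp
  have htp0 : 0 < t / p := div_pos ht hpR
  -- the event is contained in the union of the events {S k < t/p}
  have hsub : {ω | ∑ k ∈ range p, S k ω < t} ⊆ ⋃ k ∈ range p, {ω | S k ω < t / p} := by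
    intro ω hω
    by_contra h
    simp only [Set.mem_iUnion, Set.mem_setOf_eq, not_exists, not_lt] at h
    have : (p : ℝ) * (t / p) ≤ ∑ k ∈ range p, S k ω := by
      calc (p : ℝ) * (t / p) = ∑ k ∈ range p, (t / p) := by
            simp [mul_comm]
        _ ≤ ∑ k ∈ range p, S k ω :=
            Finset.sum_le_sum fun k hk => h k hk
    rw [mul_div_cancel₀ _ hpR.ne'] at this
    exact absurd hω (not_lt.mpr this)
  calc μ {ω | ∑ k ∈ range p, S k ω < t}
      ≤ ∑ k ∈ range p, μ {ω | S k ω < t / p} :=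
        (measure_mono hsub).trans (measure_biUnion_finset_le _ _)
    _ ≤ ∑ k ∈ range p, ENNReal.ofReal (C * (t / p) ^ 2) :=
        Finset.sum_le_sum fun k hk =>
          hest k (Finset.mem_range.mp hk) (t / p) htp0 htp
    _ = ENNReal.ofReal (C * t ^ 2 / p) := by
        rw [Finset.sum_const, card_range, nsmul_eq_mul,
          ← ENNReal.ofReal_natCast, ← ENNReal.ofReal_mul (Nat.cast_nonneg p)]
        congr 1
        field_simp
end

section
/- Let X be a compact Hausdorff topological space, M ⊆ X an open subset equipped with the subspace topology and its Borel σ-algebra, and κ a Markov kernel from M to M (so κ(x) is a Borel probability measure on M for each x ∈ M, measurably in x). Suppose that for every continuous function f : X → ℝ and every boundary point x̄ ∈ X \ M, the function x ↦ ∫_M f(y) κ(x)(dy) tends to f(x̄) as x tends to x̄ along the filter 𝓝[M] x̄ of neighborhoods of x̄ within M. Then for every continuous function g : OnePoint M → ℝ on the one-point compactification M ∪ {∞} of M, the function x ↦ ∫_M g(y) κ(x)(dy) tends to g(∞) along the cocompact filter of M (the filter generated by complements of compact subsets of M). -/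
open MeasureTheory ProbabilityTheory Filter Set

/-- Lemma 5.1: if the kernel `κ` on the open subset `M` of the compact Hausdorff
space `X` has the `C_*` property for the compactification `X` (i.e. `x ↦ ∫ f dκ(x)`
tends to `f(x̄)` as `x → x̄ ∈ X \ M`, for every continuous `f : X → ℝ`), then it has
the `C_*` property for the one-point compactification of `M`. -/
theorem cstar_onePoint_of_cstar_compactification
    {X : Type*} [TopologicalSpace X] [CompactSpace X] [T2Space X]
    (M : Set X) (hM : IsOpen M) [MeasurableSpace M] [BorelSpace M]
    (κ : Kernel M M) [IsMarkovKernel κ]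
    (h : ∀ f : X → ℝ, Continuous f → ∀ xb : X, xb ∉ M →
      Tendsto (fun x : M => ∫ y : M, f (y : X) ∂(κ x))
        (Filter.comap (Subtype.val : M → X) (nhdsWithin xb M)) (nhds (f xb))) :
    ∀ g : OnePoint M → ℝ, Continuous g →
      Tendsto (fun x : M => ∫ y : M, g (OnePoint.some y) ∂(κ x))
        (Filter.cocompact M) (nhds (g OnePoint.infty)) := by
  classical
  intro g hg
  -- the collapse map β : X → OnePoint M
  set β : X → OnePoint M := fun x =>
    if hx : x ∈ M then OnePoint.some (⟨x, hx⟩ : M) else OnePoint.infty with hβdef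
  have hβM : ∀ y : M, β (y : X) = OnePoint.some y := by
    intro y; simp [hβdef, y.2]
  have hβB : ∀ x : X, x ∉ M → β x = OnePoint.infty := by
    intro x hx; simp [hβdef, hx]
  have hβcont : Continuous β := by
    rw [continuous_def]
    intro s hs
    by_cases hinf : OnePoint.infty ∈ s
    · rcases (OnePoint.isOpen_iff_of_mem' hinf).1 hs with ⟨hKc, hKo⟩
      -- preimage is complement of the (compact, closed) image of (some ⁻¹' s)ᶜ
      have hpre : β ⁻¹' s = ((Subtype.val : M → X) '' ((OnePoint.some ⁻¹' s)ᶜ))ᶜ := by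
        ext x
        by_cases hx : x ∈ M
        · simp only [mem_preimage, mem_compl_iff, mem_image]
          constructor
          · intro hxs ⟨y, hy, hyx⟩
            apply hy
            have : β x = OnePoint.some y := by
              rw [← hyx] at hx ⊢
              simpa using hβM y
            rwa [this] at hxs
          · intro hcon
            have : β x = OnePoint.some ⟨x, hx⟩ := by simpa [hβdef, hx]
            rw [this]
            by_contra hns
            exact hcon ⟨⟨x, hx⟩, hns, rfl⟩
        · simp only [mem_preimage, hβB x hx, hinf, true_iff, mem_compl_iff, mem_image]
          rintro ⟨y, _, hyx⟩
          exact hx (hyx ▸ y.2)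
      rw [hpre]
      have : IsCompact ((Subtype.val : M → X) '' ((OnePoint.some ⁻¹' s)ᶜ)) :=
        hKc.image continuous_subtype_val
      exact this.isClosed.isOpen_compl
    · have hKo : IsOpen ((OnePoint.some : M → OnePoint M) ⁻¹' s) :=
        (OnePoint.isOpen_iff_of_notMem hinf).1 hs
      have hpre : β ⁻¹' s = (Subtype.val : M → X) '' (OnePoint.some ⁻¹' s) := by
        ext x
        by_cases hx : x ∈ M
        · simp only [mem_preimage, mem_image]
          constructor
          · intro hxs
            refine ⟨⟨x, hx⟩, ?_, rfl⟩
            have : β x = OnePoint.some ⟨x, hx⟩ := by simpa [hβdef, hx]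
            rwa [← this]
          · rintro ⟨y, hy, hyx⟩
            have : β x = OnePoint.some y := by
              rw [← hyx] at hx ⊢
              simpa using hβM y
            rwa [this]
        · simp only [mem_preimage, hβB x hx, hinf, false_iff, mem_image, not_exists]
          rintro y ⟨hy, hyx⟩
          exact hx (hyx ▸ y.2)
      rw [hpre]
      exact hM.isOpenMap_subtype_val _ hKo
  -- the composed function
  set f : X → ℝ := fun x => g (β x) with hfdef
  have hfcont : Continuous f := hg.comp hβcont
  have hfval : ∀ y : M, f (y : X) = g (OnePoint.some y) := fun y => by
    simp [hfdef, hβM y]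
  have key : ∀ U ∈ nhds (g OnePoint.infty),
      {x : M | ∫ y : M, g (OnePoint.some y) ∂(κ x) ∈ U} ∈ Filter.cocompact M := by
    intro U hU
    -- for each boundary point, an open neighborhood where the integral lands in U
    have hpt : ∀ xb : X, xb ∉ M → ∃ V : Set X, IsOpen V ∧ xb ∈ V ∧
        ∀ x : M, (x : X) ∈ V → ∫ y : M, g (OnePoint.some y) ∂(κ x) ∈ U := by
      intro xb hxb
      have htend := h f hfcont xb hxb
      have hfxb : f xb = g OnePoint.infty := by simp [hfdef, hβB xb hxb]
      rw [hfxb] at htend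
      have hmem := htend hU
      rcases mem_comap.1 hmem with ⟨t, ht, hts⟩
      rcases mem_nhdsWithin.1 ht with ⟨V, hVo, hxbV, hVt⟩
      refine ⟨V, hVo, hxbV, fun x hxV => ?_⟩
      have hxt : (x : X) ∈ t := hVt ⟨hxV, x.2⟩
      have := hts hxt
      simp only [mem_preimage] at this
      have : ∫ y : M, f (y : X) ∂(κ x) ∈ U := this
      simpa only [hfval] using this
    choose V hVo hVmem hVU using fun xb (hxb : xb ∉ M) => hpt xb hxb
    -- the complement of the union of the V's is a compact subset of M
    set W : Set X := ⋃ (xb : X) (hxb : xb ∉ M), V xb hxb with hWdef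
    have hWo : IsOpen W := isOpen_iUnion fun xb => isOpen_iUnion fun hxb => hVo xb hxb
    have hWsub : Mᶜ ⊆ W := fun xb hxb => mem_iUnion.2 ⟨xb, mem_iUnion.2 ⟨hxb, hVmem xb hxb⟩⟩
    have hCc : IsCompact Wᶜ := hWo.isClosed_compl.isCompact
    have hCM : Wᶜ ⊆ M := fun x hx => by
      by_contra hxM; exact hx (hWsub hxM)
    set K : Set M := (Subtype.val : M → X) ⁻¹' Wᶜ with hKdef
    have hKc : IsCompact K := by
      rw [Topology.IsEmbedding.isCompact_iff Topology.IsEmbedding.subtypeVal]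
      have : (Subtype.val : M → X) '' K = Wᶜ := by
        apply Subset.antisymm
        · rintro x ⟨y, hy, rfl⟩; exact hy
        · intro x hx; exact ⟨⟨x, hCM hx⟩, hx, rfl⟩
      rwa [this]
    rw [mem_cocompact]
    refine ⟨K, hKc, fun x hx => ?_⟩
    simp only [mem_compl_iff, hKdef, mem_preimage, not_not] at hx
    rcases mem_iUnion.1 hx with ⟨xb, hxb⟩
    rcases mem_iUnion.1 hxb with ⟨hxbM, hxV⟩
    exact hVU xb hxbM x hxV
  intro U hU
  exact key U hU
end

section
/- Let M̄ be a topological space, M ⊆ M̄ a subset, and let (U_n⁰)_{n≥1}, (U_n)_{n≥1} be families of subsets of M with U_n⁰ ⊆ U_n for every n. Assume the regularity condition: for every sequence (x_j) in M converging in M̄ to a point x̄ ∈ M̄ \ M and every choice of indices (n_j) with x_j ∈ U⁰_{n_j}, the sets U_{n_j} converge to x̄, meaning that for every neighborhood V of x̄ in M̄ there exists J such that U_{n_j} ⊆ V for all j ≥ J. Let (x_k) be a sequence in M converging to x̄ ∈ M̄ \ M, and for each k let n_k, m_k be indices with x_k ∈ U⁰_{n_k} and U⁰_{m_k} ∩ U⁰_{n_k}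 ≠ ∅. Then every sequence (z_k) with z_k ∈ U_{m_k} converges to x̄. -/
open Filter

/-- The `p = 2` case of Lemma 3.1: for a regular (weak uniform) cover `{U⁰ n, U n}`
of `M ⊆ M̄`, if `x k → x̄ ∈ M̄ \ M`, `x k ∈ U⁰ (nk k)`, `U⁰ (mk k)` meets
`U⁰ (nk k)`, and `z k ∈ U (mk k)`, then `z k → x̄`. -/
theorem tendsto_of_two_step_regular_cover
    {X : Type*} [TopologicalSpace X] (M : Set X)
    (U0 U : ℕ → Set X) (hU0U : ∀ n, U0 n ⊆ U n) (hUM : ∀ n, U n ⊆ M)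
    (hreg : ∀ (x : ℕ → X) (xb : X), (∀ j, x j ∈ M) → xb ∉ M →
      Tendsto x atTop (nhds xb) →
      ∀ nj : ℕ → ℕ, (∀ j, x j ∈ U0 (nj j)) →
      ∀ V ∈ nhds xb, ∃ J : ℕ, ∀ j ≥ J, U (nj j) ⊆ V)
    (x : ℕ → X) (xb : X) (hxM : ∀ k, x k ∈ M) (hxb : xb ∉ M)
    (hconv : Tendsto x atTop (nhds xb))
    (nk mk : ℕ → ℕ) (hn : ∀ k, x k ∈ U0 (nk k))
    (hmeet : ∀ k, (U0 (mk k) ∩ U0 (nk k)).Nonempty)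
    (z : ℕ → X) (hz : ∀ k, z k ∈ U (mk k)) :
    Tendsto z atTop (nhds xb) := by
  choose y hy1 hy2 using hmeet
  have hyM : ∀ k, y k ∈ M := fun k => hUM _ (hU0U _ (hy2 k))
  have hyconv : Tendsto y atTop (nhds xb) := by
    rw [tendsto_def]
    intro V hV
    obtain ⟨J, hJ⟩ := hreg x xb hxM hxb hconv nk hn V hV
    exact Filter.eventually_atTop.2 ⟨J, fun k hk => hJ k hk (hU0U _ (hy2 k))⟩
  rw [tendsto_def]
  intro V hV
  obtain ⟨J, hJ⟩ := hreg y xb hyM hxb hyconv mk hy1 V hV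
  exact Filter.eventually_atTop.2 ⟨J, fun k hk => hJ k hk (hz k)⟩
end

section
/- Let M̄ be a topological space, M ⊆ M̄ a subset, and let (U_n⁰)_{n≥1}, (U_n)_{n≥1} be families of subsets of M with U_n⁰ ⊆ U_n for every n, satisfying the regularity condition: for every sequence (x_j) in M converging in M̄ to a point x̄ ∈ M̄ \ M and every choice of indices (n_j) with x_j ∈ U⁰_{n_j}, the sets U_{n_j} converge to x̄, meaning that for every neighborhood V of x̄ in M̄ there exists J such that U_{n_j} ⊆ V for all j ≥ J. For x ∈ M and p ≥ 1 define W_x^p = ⋃ { U_{n_p} : there exist indices n_1, …, n_p with x ∈ U⁰_{n_1} and U⁰_{n_{i+1}} ∩ U⁰_{n_i} ≠ ∅ for 1 ≤ i < p }. Then for every fixed p ≥ 1 and every sequence (x_k) in M converging in M̄ to x̄ ∈ M̄ \ M, the sets W_{x_k}^p converge to x̄: for every neighborhood V of x̄ in M̄ there exists K such that W_{x_k}^p ⊆ V for all k ≥ K. -/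
open Filter

/-- `chainUnion U0 U x p` is the set `W_x^p` of the paper: the union of all sets
`U (n_p)` over chains of indices `n_1, …, n_p` with `x ∈ U0 (n_1)` and
`U0 (n_{i+1}) ∩ U0 (n_i) ≠ ∅` for `1 ≤ i < p`. -/
def chainUnion {X : Type*} (U0 U : ℕ → Set X) (x : X) (p : ℕ) : Set X :=
  {y | ∃ c : ℕ → ℕ, x ∈ U0 (c 1) ∧
    (∀ i, 1 ≤ i → i < p → (U0 (c (i + 1)) ∩ U0 (c i)).Nonempty) ∧ y ∈ U (c p)}

theorem chainUnion_aux
    {X : Type*} [TopologicalSpace X] (M : Set X)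
    (U0 U : ℕ → Set X) (hU0U : ∀ n, U0 n ⊆ U n) (hUM : ∀ n, U n ⊆ M)
    (hreg : ∀ (x : ℕ → X) (xb : X), (∀ j, x j ∈ M) → xb ∉ M →
      Tendsto x atTop (nhds xb) →
      ∀ nj : ℕ → ℕ, (∀ j, x j ∈ U0 (nj j)) →
      ∀ V ∈ nhds xb, ∃ J : ℕ, ∀ j ≥ J, U (nj j) ⊆ V)
    (p : ℕ) (hp : 1 ≤ p) :
    ∀ (x : ℕ → X) (xb : X), (∀ k, x k ∈ M) → xb ∉ M →
    Tendsto x atTop (nhds xb) →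
    ∀ V ∈ nhds xb, ∃ K : ℕ, ∀ k ≥ K, chainUnion U0 U (x k) p ⊆ V := by
  induction p, hp using Nat.le_induction with
  | base =>
    intro x xb hxM hxb hconv V hV
    by_contra h
    push_neg at h
    simp only [Set.not_subset] at h
    choose k hk y hy hyV using fun K => h K
    simp only [chainUnion, Set.mem_setOf_eq] at hy
    choose c hc1 _hc2 hc3 using hy
    have hkt : Tendsto k atTop atTop := tendsto_atTop_mono hk tendsto_id
    obtain ⟨J, hJ⟩ := hreg (x ∘ k) xb (fun j => hxM (k j)) hxb (hconv.comp hkt)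
      (fun j => c j 1) hc1 V hV
    exact hyV J (hJ J le_rfl (hc3 J))
  | succ p hp IH =>
    intro x xb hxM hxb hconv V hV
    by_contra h
    push_neg at h
    simp only [Set.not_subset] at h
    choose k hk y hy hyV using fun K => h K
    simp only [chainUnion, Set.mem_setOf_eq] at hy
    choose c hc1 hc2 hc3 using hy
    have hkt : Tendsto k atTop atTop := tendsto_atTop_mono hk tendsto_id
    -- pick the intersection witnesses
    have hw : ∀ j, ∃ w, w ∈ U0 (c j (p + 1)) ∩ U0 (c j p) :=
      fun j => hc2 j p hp (Nat.lt_succ_self p)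
    choose w hw1 using hw
    have hwchain : ∀ j, w j ∈ chainUnion U0 U (x (k j)) p := fun j =>
      ⟨c j, hc1 j, fun i h1 h2 => hc2 j i h1 (h2.trans (Nat.lt_succ_self p)),
        hU0U _ (hw1 j).2⟩
    have hwM : ∀ j, w j ∈ M := fun j => hUM _ (hU0U _ (hw1 j).2)
    have hwconv : Tendsto w atTop (nhds xb) := by
      rw [tendsto_atTop']
      intro V' hV'
      obtain ⟨K, hK⟩ := IH (x ∘ k) xb (fun j => hxM (k j)) hxb (hconv.comp hkt) V' hV'
      exact ⟨K, fun j hj => hK j hj (hwchain j)⟩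
    obtain ⟨J, hJ⟩ := hreg w xb hwM hxb hwconv (fun j => c j (p + 1))
      (fun j => (hw1 j).1) V hV
    exact hyV J (hJ J le_rfl (hc3 J))

/-- Lemma 3.1: for a regular (weak uniform) cover `{U⁰ n, U n}` of `M ⊆ M̄`,
if `x k → x̄ ∈ M̄ \ M` then the sets `W_{x k}^p` converge to `x̄` for each fixed
`p ≥ 1`: every neighborhood of `x̄` eventually contains `W_{x k}^p`. -/
theorem chainUnion_tendsto_of_regular_cover
    {X : Type*} [TopologicalSpace X] (M : Set X)
    (U0 U : ℕ → Set X) (hU0U : ∀ n, U0 n ⊆ U n) (hUM : ∀ n, U n ⊆ M)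
    (hreg : ∀ (x : ℕ → X) (xb : X), (∀ j, x j ∈ M) → xb ∉ M →
      Tendsto x atTop (nhds xb) →
      ∀ nj : ℕ → ℕ, (∀ j, x j ∈ U0 (nj j)) →
      ∀ V ∈ nhds xb, ∃ J : ℕ, ∀ j ≥ J, U (nj j) ⊆ V)
    (p : ℕ) (hp : 1 ≤ p)
    (x : ℕ → X) (xb : X) (hxM : ∀ k, x k ∈ M) (hxb : xb ∉ M)
    (hconv : Tendsto x atTop (nhds xb)) :
    ∀ V ∈ nhds xb, ∃ K : ℕ, ∀ k ≥ K, chainUnion U0 U (x k) p ⊆ V := by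
  exact chainUnion_aux M U0 U hU0U hUM hreg p hp x xb hxM hxb hconv
end
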